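/- (Stress-energy tensor, divergence.) Let X be a differentiable field of antisymmetric matrices on ℝ⁴ with α-current Z^a = ∂_b X^{ab} and β-current Y^a = ∂_b (*X)^{ab}, and define W^b_a = (1/2)(X_{ac} X^{bc} + (*X)_{ac} (*X)^{bc}). Then at every point and for every index a: ∂_b W^b_a = Z^b X_{ba} + Y^b (*X)_{ba}. -/

import Mathlib

noncomputable section

/-- The Minkowski metric diag(-1,1,1,1); it equals its own inverse. -/
def mink : Fin 4 → Fin 4 → ℝ :=
  fun a b => if a = b then (if a = 0 then -1 else 1) else 0

/-- The Levi-Civita symbol, totally antisymmetric with `lev 0 1 2 3 = 1`. -/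
def lev (a b c d : Fin 4) : ℝ :=
  (((b : ℕ) : ℝ) - ((a : ℕ) : ℝ)) * (((c : ℕ) : ℝ) - ((a : ℕ) : ℝ)) *
      (((d : ℕ) : ℝ) - ((a : ℕ) : ℝ)) * (((c : ℕ) : ℝ) - ((b : ℕ) : ℝ)) *
      (((d : ℕ) : ℝ) - ((b : ℕ) : ℝ)) * (((d : ℕ) : ℝ) - ((c : ℕ) : ℝ)) / 12

/-- Raise one index with the metric: `A^a = η^{ab} A_b`. -/
def raise1 (A : Fin 4 → ℝ) : Fin 4 → ℝ :=
  fun a => ∑ b, mink a b * A b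

/-- Raise both indices of a second rank tensor: `X^{ab} = η^{ac} η^{bd} X_{cd}`. -/
def raise2 (X : Fin 4 → Fin 4 → ℝ) : Fin 4 → Fin 4 → ℝ :=
  fun a b => ∑ c, ∑ d, mink a c * mink b d * X c d

/-- The Hodge dual of a second rank tensor: `(*X)_{ab} = (1/2) ε_{abcd} X^{cd}`. -/
def hodge (X : Fin 4 → Fin 4 → ℝ) : Fin 4 → Fin 4 → ℝ :=
  fun a b => (1 / 2) * ∑ c, ∑ d, lev a b c d * raise2 X c d

/-- The partial derivative of a function on ℝ⁴ in the `a`-th coordinate direction. -/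
def pd (a : Fin 4) (f : (Fin 4 → ℝ) → ℝ) (x : Fin 4 → ℝ) : ℝ :=
  fderiv ℝ f x (Pi.single a 1)

/-- The α-current of a field of antisymmetric matrices: `Z^a = ∂_b X^{ab}`. -/
def alphaCurrent (X : (Fin 4 → ℝ) → Fin 4 → Fin 4 → ℝ) (a : Fin 4) (x : Fin 4 → ℝ) : ℝ :=
  ∑ b, pd b (fun y => raise2 (X y) a b) x

/-- The β-current of a field of antisymmetric matrices: `Y^a = ∂_b (*X)^{ab}`. -/
def betaCurrent (X : (Fin 4 → ℝ) → Fin 4 → Fin 4 → ℝ) (a : Fin 4) (x : Fin 4 → ℝ) : ℝ :=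
  ∑ b, pd b (fun y => raise2 (hodge (X y)) a b) x


/-- The stress-energy tensor `W^b_a` built from an antisymmetric matrix `X`. -/
def Wtensor (X : Fin 4 → Fin 4 → ℝ) (b a : Fin 4) : ℝ :=
  (1 / 2) * ((∑ c, X a c * raise2 X b c) + (∑ c, hodge X a c * raise2 (hodge X) b c))

lemma pd_add {f g : (Fin 4 → ℝ) → ℝ} {x} (hf : DifferentiableAt ℝ f x)
    (hg : DifferentiableAt ℝ g x) (a) :
    pd a (fun y => f y + g y) x = pd a f x + pd a g x := by
  simp [pd, fderiv_fun_add hf hg]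

lemma pd_const_mul {f : (Fin 4 → ℝ) → ℝ} {x} (hf : DifferentiableAt ℝ f x) (c : ℝ) (a) :
    pd a (fun y => c * f y) x = c * pd a f x := by
  simp [pd, fderiv_const_mul hf c]

lemma pd_mul {f g : (Fin 4 → ℝ) → ℝ} {x} (hf : DifferentiableAt ℝ f x)
    (hg : DifferentiableAt ℝ g x) (a) :
    pd a (fun y => f y * g y) x = pd a f x * g x + f x * pd a g x := by
  simp [pd, fderiv_fun_mul hf hg]; ring

lemma pd_sum {ι : Type*} (s : Finset ι) {f : ι → (Fin 4 → ℝ) → ℝ} {x}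
    (hf : ∀ i ∈ s, DifferentiableAt ℝ (f i) x) (a) :
    pd a (fun y => ∑ i ∈ s, f i y) x = ∑ i ∈ s, pd a (f i) x := by
  simp [pd, fderiv_fun_sum hf]

variable {F : (Fin 4 → ℝ) → Fin 4 → Fin 4 → ℝ}

lemma diff_raise2 (hF : ∀ i j, Differentiable ℝ fun y => F y i j) (c d) :
    Differentiable ℝ fun y => raise2 (F y) c d := by
  unfold raise2
  exact Differentiable.fun_sum fun i _ => Differentiable.fun_sum fun j _ => (hF i j).const_mul _

lemma diff_hodge (hF : ∀ i j, Differentiable ℝ fun y => F y i j) (c d) :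
    Differentiable ℝ fun y => hodge (F y) c d := by
  unfold hodge
  exact Differentiable.const_mul (Differentiable.fun_sum fun i _ => Differentiable.fun_sum fun j _ =>
    (diff_raise2 hF i j).const_mul _) _

lemma pd_raise2 (hF : ∀ i j, Differentiable ℝ fun y => F y i j) (b x c d) :
    pd b (fun y => raise2 (F y) c d) x
      = raise2 (fun i j => pd b (fun y => F y i j) x) c d := by
  unfold raise2
  rw [pd_sum _ (fun i _ => ((Differentiable.fun_sum fun j _ => ((hF i j).const_mul _)) _))]
  refine Finset.sum_congr rfl fun i _ => ?_
  rw [pd_sum _ (fun j _ => ((hF i j).const_mul _) x)]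
  exact Finset.sum_congr rfl fun j _ => pd_const_mul ((hF i j) x) _ b

lemma pd_hodge (hF : ∀ i j, Differentiable ℝ fun y => F y i j) (b x c d) :
    pd b (fun y => hodge (F y) c d) x
      = hodge (fun i j => pd b (fun y => F y i j) x) c d := by
  unfold hodge
  rw [pd_const_mul (Differentiable.fun_sum (fun i _ => Differentiable.fun_sum fun j _ =>
    (diff_raise2 hF i j).const_mul _) x)]
  congr 1
  rw [pd_sum _ (fun i _ => (Differentiable.fun_sum fun j _ => ((diff_raise2 hF i j).const_mul _)) x)]
  refine Finset.sum_congr rfl fun i _ => ?_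
  rw [pd_sum _ (fun j _ => ((diff_raise2 hF i j).const_mul _) x)]
  exact Finset.sum_congr rfl fun j _ => by
    rw [pd_const_mul (diff_raise2 hF i j x), pd_raise2 hF]

lemma raise2_eq (X : Fin 4 → Fin 4 → ℝ) (a b : Fin 4) :
    raise2 X a b = mink a a * mink b b * X a b := by
  fin_cases a <;> fin_cases b <;> simp [raise2, mink, Fin.sum_univ_four]

lemma hodge_eq (X : Fin 4 → Fin 4 → ℝ) (a b : Fin 4) :
    hodge X a b = (1/2) * ∑ c, ∑ d, lev a b c d * (mink c c * mink d d * X c d) := by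
  simp only [hodge, raise2_eq]
lemma fv2 : (((2:Fin 4) : ℕ) : ℝ) = 2 := rfl
lemma fv3 : (((3:Fin 4) : ℕ) : ℝ) = 3 := rfl
lemma ne20 : (2:Fin 4) ≠ 0 := by decide
lemma ne30 : (3:Fin 4) ≠ 0 := by decide
lemma hodge_00 (X : Fin 4 → Fin 4 → ℝ) : hodge X 0 0 = 0 := by
  rw [hodge_eq]; norm_num [lev, mink, Fin.sum_univ_four, fv2, fv3, ne20, ne30]; try ring

lemma hodge_01 (X : Fin 4 → Fin 4 → ℝ) : hodge X 0 1 = (1/2) * (X 2 3 - X 3 2) := by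
  rw [hodge_eq]; norm_num [lev, mink, Fin.sum_univ_four, fv2, fv3, ne20, ne30]; try ring

lemma hodge_02 (X : Fin 4 → Fin 4 → ℝ) : hodge X 0 2 = (1/2) * (-X 1 3 + X 3 1) := by
  rw [hodge_eq]; norm_num [lev, mink, Fin.sum_univ_four, fv2, fv3, ne20, ne30]; try ring

lemma hodge_03 (X : Fin 4 → Fin 4 → ℝ) : hodge X 0 3 = (1/2) * (X 1 2 - X 2 1) := by
  rw [hodge_eq]; norm_num [lev, mink, Fin.sum_univ_four, fv2, fv3, ne20, ne30]; try ring

lemma hodge_10 (X : Fin 4 → Fin 4 → ℝ) : hodge X 1 0 = (1/2) * (-X 2 3 + X 3 2) := by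
  rw [hodge_eq]; norm_num [lev, mink, Fin.sum_univ_four, fv2, fv3, ne20, ne30]; try ring

lemma hodge_11 (X : Fin 4 → Fin 4 → ℝ) : hodge X 1 1 = 0 := by
  rw [hodge_eq]; norm_num [lev, mink, Fin.sum_univ_four, fv2, fv3, ne20, ne30]; try ring

lemma hodge_12 (X : Fin 4 → Fin 4 → ℝ) : hodge X 1 2 = (1/2) * (-X 0 3 + X 3 0) := by
  rw [hodge_eq]; norm_num [lev, mink, Fin.sum_univ_four, fv2, fv3, ne20, ne30]; try ring

lemma hodge_13 (X : Fin 4 → Fin 4 → ℝ) : hodge X 1 3 = (1/2) * (X 0 2 - X 2 0) := by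
  rw [hodge_eq]; norm_num [lev, mink, Fin.sum_univ_four, fv2, fv3, ne20, ne30]; try ring

lemma hodge_20 (X : Fin 4 → Fin 4 → ℝ) : hodge X 2 0 = (1/2) * (X 1 3 - X 3 1) := by
  rw [hodge_eq]; norm_num [lev, mink, Fin.sum_univ_four, fv2, fv3, ne20, ne30]; try ring

lemma hodge_21 (X : Fin 4 → Fin 4 → ℝ) : hodge X 2 1 = (1/2) * (X 0 3 - X 3 0) := by
  rw [hodge_eq]; norm_num [lev, mink, Fin.sum_univ_four, fv2, fv3, ne20, ne30]; try ring

lemma hodge_22 (X : Fin 4 → Fin 4 → ℝ) : hodge X 2 2 = 0 := by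
  rw [hodge_eq]; norm_num [lev, mink, Fin.sum_univ_four, fv2, fv3, ne20, ne30]; try ring

lemma hodge_23 (X : Fin 4 → Fin 4 → ℝ) : hodge X 2 3 = (1/2) * (-X 0 1 + X 1 0) := by
  rw [hodge_eq]; norm_num [lev, mink, Fin.sum_univ_four, fv2, fv3, ne20, ne30]; try ring

lemma hodge_30 (X : Fin 4 → Fin 4 → ℝ) : hodge X 3 0 = (1/2) * (-X 1 2 + X 2 1) := by
  rw [hodge_eq]; norm_num [lev, mink, Fin.sum_univ_four, fv2, fv3, ne20, ne30]; try ring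

lemma hodge_31 (X : Fin 4 → Fin 4 → ℝ) : hodge X 3 1 = (1/2) * (-X 0 2 + X 2 0) := by
  rw [hodge_eq]; norm_num [lev, mink, Fin.sum_univ_four, fv2, fv3, ne20, ne30]; try ring

lemma hodge_32 (X : Fin 4 → Fin 4 → ℝ) : hodge X 3 2 = (1/2) * (X 0 1 - X 1 0) := by
  rw [hodge_eq]; norm_num [lev, mink, Fin.sum_univ_four, fv2, fv3, ne20, ne30]; try ring

lemma hodge_33 (X : Fin 4 → Fin 4 → ℝ) : hodge X 3 3 = 0 := by
  rw [hodge_eq]; norm_num [lev, mink, Fin.sum_univ_four, fv2, fv3, ne20, ne30]; try ring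


lemma mink_00 : mink 0 0 = -1 := rfl
lemma mink_11 : mink 1 1 = 1 := rfl
lemma mink_22 : mink 2 2 = 1 := rfl
lemma mink_33 : mink 3 3 = 1 := rfl

set_option maxHeartbeats 2000000 in
lemma alg (XX : Fin 4 → Fin 4 → ℝ) (DD : Fin 4 → Fin 4 → Fin 4 → ℝ)
    (hX : ∀ i j, XX i j = - XX j i) (hD : ∀ b i j, DD b i j = - DD b j i) (a : Fin 4) :
    (∑ b, (1/2 : ℝ) *
      ((∑ c, (DD b a c * raise2 XX b c + XX a c * raise2 (DD b) b c))
       + (∑ c, (hodge (DD b) a c * raise2 (hodge XX) b c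
          + hodge XX a c * raise2 (hodge (DD b)) b c))))
    = (∑ b, (∑ e, raise2 (DD e) b e) * XX b a)
      + (∑ b, (∑ e, raise2 (hodge (DD e)) b e) * hodge XX b a) := by
  have x00 : XX 0 0 = 0 := by have := hX 0 0; linarith
  have x11 : XX 1 1 = 0 := by have := hX 1 1; linarith
  have x22 : XX 2 2 = 0 := by have := hX 2 2; linarith
  have x33 : XX 3 3 = 0 := by have := hX 3 3; linarith
  have d00 : ∀ b, DD b 0 0 = 0 := fun b => by have := hD b 0 0; linarith
  have d11 : ∀ b, DD b 1 1 = 0 := fun b => by have := hD b 1 1; linarith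
  have d22 : ∀ b, DD b 2 2 = 0 := fun b => by have := hD b 2 2; linarith
  have d33 : ∀ b, DD b 3 3 = 0 := fun b => by have := hD b 3 3; linarith
  have ha : a = 0 ∨ a = 1 ∨ a = 2 ∨ a = 3 := by fin_cases a <;> decide
  rcases ha with rfl|rfl|rfl|rfl <;>
  · simp only [Fin.sum_univ_four, raise2_eq,
      hodge_00, hodge_01, hodge_02, hodge_03, hodge_10, hodge_11, hodge_12, hodge_13,
      hodge_20, hodge_21, hodge_22, hodge_23, hodge_30, hodge_31, hodge_32, hodge_33,
      mink_00, mink_11, mink_22, mink_33,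
      hX 1 0, hX 2 0, hX 2 1, hX 3 0, hX 3 1, hX 3 2,
      hD 0 1 0, hD 0 2 0, hD 0 2 1, hD 0 3 0, hD 0 3 1, hD 0 3 2,
      hD 1 1 0, hD 1 2 0, hD 1 2 1, hD 1 3 0, hD 1 3 1, hD 1 3 2,
      hD 2 1 0, hD 2 2 0, hD 2 2 1, hD 2 3 0, hD 2 3 1, hD 2 3 2,
      hD 3 1 0, hD 3 2 0, hD 3 2 1, hD 3 3 0, hD 3 3 1, hD 3 3 2,
      x00, x11, x22, x33, d00, d11, d22, d33]
    ring


/-- Stress-energy tensor, divergence: `∂_b W^b_a = Z^b X_{ba} + Y^b (*X)_{ba}`. -/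
theorem stress_energy_divergence
    (X : (Fin 4 → ℝ) → Fin 4 → Fin 4 → ℝ)
    (hanti : ∀ x a b, X x a b = - X x b a)
    (hdiff : ∀ a b, Differentiable ℝ (fun x => X x a b)) :
    ∀ (x : Fin 4 → ℝ) (a : Fin 4),
      (∑ b, pd b (fun y => Wtensor (X y) b a) x)
        = (∑ b, alphaCurrent X b x * X x b a)
            + (∑ b, betaCurrent X b x * hodge (X x) b a) := by
  intro x a
  set D : Fin 4 → Fin 4 → Fin 4 → ℝ := fun b i j => pd b (fun y => X y i j) x with hD
  have hDanti : ∀ b i j, D b i j = - D b j i := by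
    intro b i j
    have h1 : (fun y => X y i j) = (fun y => -(X y j i)) := funext fun y => hanti y i j
    simp only [hD, h1, pd, fderiv_neg]
    simp
  have hXanti : ∀ i j, X x i j = - X x j i := fun i j => hanti x i j
  have hdh : ∀ i j, Differentiable ℝ fun y => hodge (X y) i j := diff_hodge hdiff
  have pdh : ∀ b i j, pd b (fun y => hodge (X y) i j) x = hodge (D b) i j := by
    intro b i j
    rw [pd_hodge hdiff]
  have pdhf : ∀ b, (fun i j => pd b (fun y => hodge (X y) i j) x) = hodge (D b) :=
    fun b => funext fun i => funext fun j => pdh b i j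
  have key : ∀ b : Fin 4, pd b (fun y => Wtensor (X y) b a) x
      = (1/2 : ℝ) *
      ((∑ c, (D b a c * raise2 (X x) b c + X x a c * raise2 (D b) b c))
       + (∑ c, (hodge (D b) a c * raise2 (hodge (X x)) b c
          + hodge (X x) a c * raise2 (hodge (D b)) b c))) := by
    intro b
    have h1i : ∀ c : Fin 4, DifferentiableAt ℝ (fun y => X y a c * raise2 (X y) b c) x :=
      fun c => ((hdiff a c).mul (diff_raise2 hdiff b c)) x
    have h2i : ∀ c : Fin 4,
        DifferentiableAt ℝ (fun y => hodge (X y) a c * raise2 (hodge (X y)) b c) x :=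
      fun c => ((hdh a c).mul (diff_raise2 hdh b c)) x
    have h1 : DifferentiableAt ℝ (fun y => ∑ c, X y a c * raise2 (X y) b c) x :=
      (DifferentiableAt.fun_sum fun c _ => h1i c)
    have h2 : DifferentiableAt ℝ
        (fun y => ∑ c, hodge (X y) a c * raise2 (hodge (X y)) b c) x :=
      (DifferentiableAt.fun_sum fun c _ => h2i c)
    have hW : (fun y => Wtensor (X y) b a)
        = fun y => (1/2 : ℝ) * ((∑ c, X y a c * raise2 (X y) b c)
            + (∑ c, hodge (X y) a c * raise2 (hodge (X y)) b c)) := rfl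
    rw [hW, pd_const_mul (h1.fun_add h2), pd_add h1 h2,
      pd_sum _ (fun c _ => h1i c), pd_sum _ (fun c _ => h2i c)]
    congr 2
    · refine Finset.sum_congr rfl fun c _ => ?_
      rw [pd_mul ((hdiff a c) x) (diff_raise2 hdiff b c x), pd_raise2 hdiff]
    · refine Finset.sum_congr rfl fun c _ => ?_
      rw [pd_mul ((hdh a c) x) (diff_raise2 hdh b c x), pd_raise2 hdh, pdhf b, pdh b a c]
  have hAlpha : ∀ b : Fin 4, alphaCurrent X b x = ∑ e, raise2 (D e) b e := by
    intro b
    unfold alphaCurrent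
    exact Finset.sum_congr rfl fun e _ => by rw [pd_raise2 hdiff]
  have hBeta : ∀ b : Fin 4, betaCurrent X b x = ∑ e, raise2 (hodge (D e)) b e := by
    intro b
    unfold betaCurrent
    refine Finset.sum_congr rfl fun e _ => ?_
    rw [pd_raise2 hdh, pdhf e]
  calc (∑ b, pd b (fun y => Wtensor (X y) b a) x)
      = ∑ b, (1/2 : ℝ) *
      ((∑ c, (D b a c * raise2 (X x) b c + X x a c * raise2 (D b) b c))
       + (∑ c, (hodge (D b) a c * raise2 (hodge (X x)) b c
          + hodge (X x) a c * raise2 (hodge (D b)) b c))) :=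
        Finset.sum_congr rfl fun b _ => key b
    _ = (∑ b, (∑ e, raise2 (D e) b e) * X x b a)
          + (∑ b, (∑ e, raise2 (hodge (D e)) b e) * hodge (X x) b a) :=
        alg (X x) D hXanti hDanti a
    _ = (∑ b, alphaCurrent X b x * X x b a)
          + (∑ b, betaCurrent X b x * hodge (X x) b a) := by
        have h1 : (∑ b, (∑ e, raise2 (D e) b e) * X x b a)
            = ∑ b, alphaCurrent X b x * X x b a :=
          Finset.sum_congr rfl fun b _ => by rw [hAlpha b]
        have h2 : (∑ b, (∑ e, raise2 (hodge (D e)) b e) * hodge (X x) b a)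
            = ∑ b, betaCurrent X b x * hodge (X x) b a :=
          Finset.sum_congr rfl fun b _ => by rw [hBeta b]
        rw [h1, h2]
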